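/- The map S ↦ v[S], defined on the collection of all finite down-admissible sets for v (including the empty set), is injective; there are exactly 2^{gen(v)} down-admissible sets for v; consequently the support supp(v) = { v[S] : S down-admissible for v } has exactly 2^{gen(v)} elements. -/

import Mathlib

namespace SL2Tilt

/-- The `i`-th `p`-adic digit of `v`. -/
def dig (p v i : ℕ) : ℕ := v / p ^ i % p

/-- A stretch: a nonempty finite set of consecutive integers. -/
def IsStretch (S : Finset ℕ) : Prop :=
  S.Nonempty ∧ ∀ a ∈ S, ∀ b ∈ S, ∀ c, a ≤ c → c ≤ b → c ∈ S

/-- `S` is down-admissible for `v` (with respect to the prime `p`):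
(d1) the digit of `v` at the minimum of each maximal stretch of `S` is nonzero, and
(d2) if `s ∈ S` and the `(s+1)`-st digit is `0`, then `s + 1 ∈ S`. -/
def DownAdm (p v : ℕ) (S : Finset ℕ) : Prop :=
  (∀ s ∈ S, (s = 0 ∨ s - 1 ∉ S) → dig p v s ≠ 0) ∧
  (∀ s ∈ S, dig p v (s + 1) = 0 → s + 1 ∈ S)

/-- `S` is up-admissible for `v` (with respect to the prime `p`):
(u1) the digit of `v` at the minimum of each maximal stretch of `S` is nonzero, and
(u2) if `s ∈ S` and the `(s+1)`-st digit is `p - 1`, then `s + 1 ∈ S`. -/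
def UpAdm (p v : ℕ) (S : Finset ℕ) : Prop :=
  (∀ s ∈ S, (s = 0 ∨ s - 1 ∉ S) → dig p v s ≠ 0) ∧
  (∀ s ∈ S, dig p v (s + 1) = p - 1 → s + 1 ∈ S)

/-- `v[S] = ∑ᵢ εᵢ aᵢ pⁱ` (εᵢ = -1 for i ∈ S, else 1), as an integer.
All nonzero digits of `v` have index `< v`, so the range `Finset.range v ∪ S` suffices. -/
def vdown (p v : ℕ) (S : Finset ℕ) : ℤ :=
  ∑ i ∈ Finset.range v ∪ S,
    (if i ∈ S then (-1 : ℤ) else 1) * (dig p v i : ℤ) * (p : ℤ) ^ i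

/-- `v(S) = ∑ᵢ aᵢ' pⁱ` where `aᵢ' = -aᵢ` if `i ∈ S`, `aᵢ' = aᵢ + 2` if `i ∉ S` and
`i - 1 ∈ S`, and `aᵢ' = aᵢ` otherwise; as an integer. -/
def vup (p v : ℕ) (S : Finset ℕ) : ℤ :=
  ∑ i ∈ Finset.range v ∪ S ∪ S.image (· + 1),
    (if i ∈ S then -(dig p v i : ℤ)
      else if i - 1 ∈ S then (dig p v i : ℤ) + 2
      else (dig p v i : ℤ)) * (p : ℤ) ^ i

/-- `v[S]` as a natural number. -/
def vdownN (p v : ℕ) (S : Finset ℕ) : ℕ := (vdown p v S).toNat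

/-- `v(S)` as a natural number. -/
def vupN (p v : ℕ) (S : Finset ℕ) : ℕ := (vup p v S).toNat

/-- `fancest' p v s` is `v` with the `p`-adic digits in positions `< s` set to zero.
This is the ancestor `fancest_{s-1}(v)` of the paper: the youngest ancestor of `v`
whose `(s-1)`-st digit is zero (with `fancest' p v 0 = fancest_{-1}(v) = v`). -/
def fancest' (p v s : ℕ) : ℕ := p ^ s * (v / p ^ s)

/-- The scalar `λ_{v,S} = ∏_{s ∈ S} (-1)^(a_s p^s) · fancest_{s-1}(v)[S]± / fancest_s(v)[S]±`. -/
def lam (p v : ℕ) (S : Finset ℕ) : ℚ :=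
  ∏ s ∈ S,
    (-1 : ℚ) ^ (dig p v s * p ^ s) *
      ((vdown p (fancest' p v s) S : ℚ) / (vdown p (fancest' p v (s + 1)) S : ℚ))

/-- The generation of `v` : the number of (matrilineal) ancestors of `v`, i.e. the
number of nonzero `p`-adic digits of `v` minus one. -/
def gen (p v : ℕ) : ℕ :=
  ((Finset.range v).filter (fun i => dig p v i ≠ 0)).card - 1

/-- A minimal down-admissible stretch for `v`: a down-admissible stretch, no proper
nonempty subset of which is down-admissible for `v`. -/
def MinDownStretch (p v : ℕ) (S : Finset ℕ) : Prop :=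
  DownAdm p v S ∧ IsStretch S ∧ ∀ T ⊂ S, T.Nonempty → ¬ DownAdm p v T

/-- A minimal up-admissible stretch for `v`. -/
def MinUpStretch (p v : ℕ) (S : Finset ℕ) : Prop :=
  UpAdm p v S ∧ IsStretch S ∧ ∀ T ⊂ S, T.Nonempty → ¬ UpAdm p v T

/-- `A` and `B` are distant: `d(A,B) > 1`, i.e. `|a - b| > 1` for all `a ∈ A`, `b ∈ B`. -/
def Distant (A B : Finset ℕ) : Prop :=
  ∀ a ∈ A, ∀ b ∈ B, a + 1 < b ∨ b + 1 < a

section Aux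

variable {p v : ℕ}

lemma dig_lt (hp : 0 < p) (v i : ℕ) : dig p v i < p := Nat.mod_lt _ hp

lemma lt_of_dig_ne (hp : 2 ≤ p) {k : ℕ} (h : dig p v k ≠ 0) : k < v := by
  have h1 : v / p ^ k ≠ 0 := fun h0 => h (by simp [dig, h0])
  have h2 : p ^ k ≤ v := by
    by_contra hlt
    exact h1 (Nat.div_eq_of_lt (by omega))
  have h3 : k < 2 ^ k := Nat.lt_two_pow_self
  have h4 : 2 ^ k ≤ p ^ k := Nat.pow_le_pow_left hp k
  omega

lemma le_log_of_dig_ne (hp : 2 ≤ p) (hv : 1 ≤ v) {k : ℕ} (h : dig p v k ≠ 0) :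
    k ≤ Nat.log p v := by
  have h1 : v / p ^ k ≠ 0 := fun h0 => h (by simp [dig, h0])
  have h2 : p ^ k ≤ v := by
    by_contra hlt
    exact h1 (Nat.div_eq_of_lt (by omega))
  exact ((Nat.le_log_iff_pow_le (by omega) (by omega)).mpr h2)

lemma dig_log_ne (hp : 2 ≤ p) (hv : 1 ≤ v) : dig p v (Nat.log p v) ≠ 0 := by
  have h1 : p ^ Nat.log p v ≤ v := Nat.pow_log_le_self p (by omega)
  have h2 : v < p ^ (Nat.log p v + 1) := Nat.lt_pow_succ_log_self (by omega) v
  have h3 : 1 ≤ v / p ^ Nat.log p v := Nat.one_le_div_iff (Nat.pow_pos (by omega)) |>.mpr h1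
  have h4 : v / p ^ Nat.log p v < p := by
    rw [Nat.div_lt_iff_lt_mul (Nat.pow_pos (by omega))]
    have he : p ^ (Nat.log p v + 1) = p * p ^ Nat.log p v := by ring
    omega
  have : dig p v (Nat.log p v) = v / p ^ Nat.log p v := Nat.mod_eq_of_lt h4
  omega

lemma climb {S : Finset ℕ} (hS : DownAdm p v S) :
    ∀ d s, s ∈ S → (∀ k, s < k → k ≤ s + d → dig p v k = 0) → s + d ∈ S := by
  intro d
  induction d with
  | zero => intro s hs _; rw [Nat.add_zero]; exact hs
  | succ n ih =>
      intro s hs hz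
      have hn : s + n ∈ S := ih s hs (fun k h1 h2 => hz k h1 (by omega))
      have h2 := hS.2 _ hn (hz _ (by omega) (by omega))
      have he : s + (n + 1) = s + n + 1 := by omega
      rw [he]
      exact h2

lemma descend {S : Finset ℕ} (hS : DownAdm p v S) :
    ∀ i, i ∈ S → ∃ a, a ∈ S ∧ a ≤ i ∧ (∀ k, a ≤ k → k ≤ i → k ∈ S) ∧ dig p v a ≠ 0 := by
  intro i
  induction i using Nat.strong_induction_on with
  | _ i ih =>
    intro hi
    by_cases h : i = 0 ∨ i - 1 ∉ S
    · refine ⟨i, hi, le_refl _, fun k h1 h2 => ?_, hS.1 i hi h⟩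
      have : k = i := by omega
      rwa [this]
    · push_neg at h
      obtain ⟨hne, hmem⟩ := h
      obtain ⟨a, ha, hai, hrun, hd⟩ := ih (i - 1) (by omega) hmem
      refine ⟨a, ha, by omega, fun k h1 h2 => ?_, hd⟩
      by_cases hk : k = i
      · rwa [hk]
      · exact hrun k h1 (by omega)

lemma mem_adm_iff {S : Finset ℕ} (hS : DownAdm p v S) (i : ℕ) :
    i ∈ S ↔ ∃ s, (s ∈ S ∧ dig p v s ≠ 0) ∧ s ≤ i ∧ ∀ k, s < k → k ≤ i → dig p v k = 0 := by
  constructor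
  · intro hi
    obtain ⟨a, ha, hai, hrun, hd⟩ := descend hS i hi
    set F := (Finset.range (i + 1)).filter fun k => dig p v k ≠ 0 with hF
    have haF : a ∈ F := by
      rw [hF, Finset.mem_filter, Finset.mem_range]; exact ⟨by omega, hd⟩
    have hFne : F.Nonempty := ⟨a, haF⟩
    set s := F.max' hFne with hs
    have hsF : s ∈ F := F.max'_mem hFne
    rw [hF, Finset.mem_filter, Finset.mem_range] at hsF
    have has : a ≤ s := Finset.le_max' F a haF
    refine ⟨s, ⟨hrun s has (by omega), hsF.2⟩, by omega, fun k h1 h2 => ?_⟩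
    by_contra hk
    have hkF : k ∈ F := by
      rw [hF, Finset.mem_filter, Finset.mem_range]; exact ⟨by omega, hk⟩
    have := Finset.le_max' F k hkF
    omega
  · rintro ⟨s, ⟨hsS, _⟩, hsi, hz⟩
    have := climb hS (i - s) s hsS (fun k h1 h2 => hz k h1 (by omega))
    have heq : s + (i - s) = i := by omega
    rwa [heq] at this

lemma phi_inj {S S' : Finset ℕ} (hS : DownAdm p v S) (hS' : DownAdm p v S')
    (h : S.filter (fun i => dig p v i ≠ 0) = S'.filter (fun i => dig p v i ≠ 0)) :
    S = S' := by
  ext i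
  rw [mem_adm_iff hS, mem_adm_iff hS']
  constructor <;> rintro ⟨s, ⟨h1, h2⟩, h3, h4⟩
  · have : s ∈ S'.filter (fun i => dig p v i ≠ 0) := by
      rw [← h, Finset.mem_filter]; exact ⟨h1, h2⟩
    rw [Finset.mem_filter] at this
    exact ⟨s, this, h3, h4⟩
  · have : s ∈ S.filter (fun i => dig p v i ≠ 0) := by
      rw [h, Finset.mem_filter]; exact ⟨h1, h2⟩
    rw [Finset.mem_filter] at this
    exact ⟨s, this, h3, h4⟩

lemma mem_lt_log {S : Finset ℕ} (hp : 2 ≤ p) (hv : 1 ≤ v) (hS : DownAdm p v S)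
    {s : ℕ} (hs : s ∈ S) : s < Nat.log p v := by
  have hne : S.Nonempty := ⟨s, hs⟩
  set m := S.max' hne with hm
  have hmS : m ∈ S := S.max'_mem hne
  have hdm : dig p v (m + 1) ≠ 0 := by
    intro h0
    have : m + 1 ∈ S := hS.2 m hmS h0
    have := S.le_max' _ this
    omega
  have h1 : m + 1 ≤ Nat.log p v := le_log_of_dig_ne hp hv hdm
  have h2 : s ≤ m := S.le_max' s hs
  omega

lemma geom_aux (hp : 1 ≤ p) (n : ℕ) :
    ∑ i ∈ Finset.range n, (p - 1) * p ^ i + 1 = p ^ n := by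
  induction n with
  | zero => simp
  | succ n ih =>
      rw [Finset.sum_range_succ]
      have key : (p - 1) * p ^ n + p ^ n = p * p ^ n := by
        have : (p - 1) + 1 = p := by omega
        calc (p - 1) * p ^ n + p ^ n = ((p - 1) + 1) * p ^ n := by ring
        _ = p * p ^ n := by rw [this]
      have hpn : p ^ (n + 1) = p * p ^ n := by ring
      omega

lemma sum_lt_pow (hp : 2 ≤ p) (a : ℕ → ℕ) (ha : ∀ i, a i < p) (n : ℕ) (A : Finset ℕ)
    (hA : A ⊆ Finset.range n) : ∑ i ∈ A, a i * p ^ i < p ^ n := by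
  have h1 : ∑ i ∈ A, a i * p ^ i ≤ ∑ i ∈ Finset.range n, a i * p ^ i :=
    Finset.sum_le_sum_of_subset hA
  have h2 : ∑ i ∈ Finset.range n, a i * p ^ i ≤ ∑ i ∈ Finset.range n, (p - 1) * p ^ i :=
    Finset.sum_le_sum (fun i _ => Nat.mul_le_mul_right _ (by have := ha i; omega))
  have h3 := geom_aux (by omega) (p := p) n
  omega

lemma sum_digits_inj (hp : 2 ≤ p) (a : ℕ → ℕ) (ha : ∀ i, a i < p) :
    ∀ n (A B : Finset ℕ), A ⊆ Finset.range n → B ⊆ Finset.range n →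
      (∀ i ∈ A, a i ≠ 0) → (∀ i ∈ B, a i ≠ 0) →
      (∑ i ∈ A, a i * p ^ i) = (∑ i ∈ B, a i * p ^ i) → A = B := by
  intro n
  induction n with
  | zero =>
      intro A B hA hB _ _ _
      rw [Finset.range_zero, Finset.subset_empty] at hA hB
      rw [hA, hB]
  | succ n ih =>
      intro A B hA hB hA0 hB0 hsum
      have hsub : ∀ (C : Finset ℕ), C ⊆ Finset.range (n + 1) → C.erase n ⊆ Finset.range n := by
        intro C hC i hi
        rw [Finset.mem_erase] at hi
        have := hC hi.2
        rw [Finset.mem_range] at this ⊢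
        omega
      have hnotmem : ∀ (C : Finset ℕ), C ⊆ Finset.range (n + 1) → n ∉ C → C ⊆ Finset.range n := by
        intro C hC hn i hi
        have := hC hi
        rw [Finset.mem_range] at this ⊢
        have : i ≠ n := fun h => hn (h ▸ hi)
        omega
      by_cases hnA : n ∈ A <;> by_cases hnB : n ∈ B
      · have e1 : ∑ i ∈ A, a i * p ^ i = a n * p ^ n + ∑ i ∈ A.erase n, a i * p ^ i := by
          conv_lhs => rw [← Finset.insert_erase hnA]
          rw [Finset.sum_insert (Finset.notMem_erase n A)]
        have e2 : ∑ i ∈ B, a i * p ^ i = a n * p ^ n + ∑ i ∈ B.erase n, a i * p ^ i := by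
          conv_lhs => rw [← Finset.insert_erase hnB]
          rw [Finset.sum_insert (Finset.notMem_erase n B)]
        have heq : (∑ i ∈ A.erase n, a i * p ^ i) = ∑ i ∈ B.erase n, a i * p ^ i := by omega
        have := ih (A.erase n) (B.erase n) (hsub A hA) (hsub B hB)
          (fun i hi => hA0 i (Finset.mem_of_mem_erase hi))
          (fun i hi => hB0 i (Finset.mem_of_mem_erase hi)) heq
        calc A = insert n (A.erase n) := (Finset.insert_erase hnA).symm
        _ = insert n (B.erase n) := by rw [this]
        _ = B := Finset.insert_erase hnB
      · exfalso
        have h1 : a n * p ^ n ≤ ∑ i ∈ A, a i * p ^ i :=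
          Finset.single_le_sum (f := fun i => a i * p ^ i) (fun i _ => Nat.zero_le _) hnA
        have h2 : 1 ≤ a n := by have := hA0 n hnA; omega
        have h3 : p ^ n ≤ a n * p ^ n := Nat.le_mul_of_pos_left _ (by omega)
        have h4 := sum_lt_pow hp a ha n B (hnotmem B hB hnB)
        omega
      · exfalso
        have h1 : a n * p ^ n ≤ ∑ i ∈ B, a i * p ^ i :=
          Finset.single_le_sum (f := fun i => a i * p ^ i) (fun i _ => Nat.zero_le _) hnB
        have h2 : 1 ≤ a n := by have := hB0 n hnB; omega
        have h3 : p ^ n ≤ a n * p ^ n := Nat.le_mul_of_pos_left _ (by omega)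
        have h4 := sum_lt_pow hp a ha n A (hnotmem A hA hnA)
        omega
      · exact ih A B (hnotmem A hA hnA) (hnotmem B hB hnB) hA0 hB0 hsum

lemma vdown_eq {S : Finset ℕ} (hSv : S ⊆ Finset.range v) :
    vdown p v S = (∑ i ∈ Finset.range v, (dig p v i : ℤ) * (p : ℤ) ^ i)
      - 2 * ∑ i ∈ S, (dig p v i : ℤ) * (p : ℤ) ^ i := by
  unfold vdown
  rw [Finset.union_eq_left.mpr hSv]
  have hcong : ∀ i ∈ Finset.range v,
      (if i ∈ S then (-1 : ℤ) else 1) * (dig p v i : ℤ) * (p : ℤ) ^ i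
        = (dig p v i : ℤ) * (p : ℤ) ^ i
          - (if i ∈ S then 2 * ((dig p v i : ℤ) * (p : ℤ) ^ i) else 0) := by
    intro i _
    split_ifs <;> ring
  rw [Finset.sum_congr rfl hcong, Finset.sum_sub_distrib, Finset.sum_ite_mem,
    Finset.inter_eq_right.mpr hSv, Finset.mul_sum]

/-- `psi T` reconstructs a down-admissible set from a set of nonzero digit positions. -/
noncomputable def psi (p v : ℕ) (T : Finset ℕ) : Finset ℕ := by
  classical
  exact (Finset.range v).filter fun i => ∃ s ∈ T, s ≤ i ∧ ∀ k ∈ Finset.Ioc s i, dig p v k = 0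

lemma mem_psi {T : Finset ℕ} {i : ℕ} :
    i ∈ psi p v T ↔ i < v ∧ ∃ s ∈ T, s ≤ i ∧ ∀ k ∈ Finset.Ioc s i, dig p v k = 0 := by
  classical
  unfold psi
  rw [Finset.mem_filter, Finset.mem_range]

lemma psi_spec (hp : 2 ≤ p) (hv : 1 ≤ v) {T : Finset ℕ}
    (hT : T ⊆ ((Finset.range v).filter (fun i => dig p v i ≠ 0)).erase (Nat.log p v)) :
    DownAdm p v (psi p v T) ∧ (psi p v T).filter (fun i => dig p v i ≠ 0) = T := by
  have hTfact : ∀ s ∈ T, dig p v s ≠ 0 ∧ s < Nat.log p v := by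
    intro s hs
    have := hT hs
    rw [Finset.mem_erase, Finset.mem_filter] at this
    refine ⟨this.2.2, ?_⟩
    have := le_log_of_dig_ne hp hv this.2.2
    omega
  have hlogv : Nat.log p v < v := lt_of_dig_ne hp (dig_log_ne hp hv)
  have key : ∀ i ∈ psi p v T, i < Nat.log p v ∨ dig p v i ≠ 0 := by
    intro i hi
    rw [mem_psi] at hi
    obtain ⟨hiv, s, hsT, hsi, hz⟩ := hi
    by_cases hil : i < Nat.log p v
    · exact Or.inl hil
    · right
      have hs := hTfact s hsT
      have : Nat.log p v ∈ Finset.Ioc s i := by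
        rw [Finset.mem_Ioc]; omega
      have := hz _ this
      exact absurd this (dig_log_ne hp hv)
  constructor
  · constructor
    · -- d1
      intro i hi hmin
      rw [mem_psi] at hi
      obtain ⟨hiv, s, hsT, hsi, hz⟩ := hi
      by_cases hsieq : s = i
      · rw [← hsieq]; exact (hTfact s hsT).1
      · exfalso
        have hslt : s < i := by omega
        have : i - 1 ∈ psi p v T := by
          rw [mem_psi]
          refine ⟨by omega, s, hsT, by omega, fun k hk => ?_⟩
          rw [Finset.mem_Ioc] at hk
          exact hz k (by rw [Finset.mem_Ioc]; omega)
        have hi0 : i ≠ 0 := by omega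
        rcases hmin with h | h
        · exact hi0 h
        · exact h this
    · -- d2
      intro i hi hd0
      rw [mem_psi] at hi ⊢
      obtain ⟨hiv, s, hsT, hsi, hz⟩ := hi
      have hs := hTfact s hsT
      have hilog : i < Nat.log p v := by
        by_contra hc
        have : Nat.log p v ∈ Finset.Ioc s i := by rw [Finset.mem_Ioc]; omega
        exact dig_log_ne hp hv (hz _ this)
      refine ⟨by omega, s, hsT, by omega, fun k hk => ?_⟩
      rw [Finset.mem_Ioc] at hk
      by_cases hki : k ≤ i
      · exact hz k (by rw [Finset.mem_Ioc]; omega)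
      · have : k = i + 1 := by omega
        rwa [this]
  · ext i
    rw [Finset.mem_filter, mem_psi]
    constructor
    · rintro ⟨⟨hiv, s, hsT, hsi, hz⟩, hd⟩
      by_cases hsieq : s = i
      · rwa [← hsieq]
      · exfalso
        have : i ∈ Finset.Ioc s i := by rw [Finset.mem_Ioc]; omega
        exact hd (hz _ this)
    · intro hiT
      have hs := hTfact i hiT
      refine ⟨⟨by omega, i, hiT, le_refl _, fun k hk => ?_⟩, hs.1⟩
      rw [Finset.mem_Ioc] at hk
      omega

end Aux

/-- The map `S ↦ v[S]` is injective on the collection of down-admissible sets for `v`;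
there are exactly `2^(gen v)` down-admissible sets for `v`; consequently the support
`supp(v) = {v[S] : S down-admissible for v}` has exactly `2^(gen v)` elements. -/
theorem stmt12 (p v : ℕ) (hp : p.Prime) (hv : 1 ≤ v) :
    Set.InjOn (fun S => vdown p v S) {S : Finset ℕ | DownAdm p v S} ∧
    {S : Finset ℕ | DownAdm p v S}.ncard = 2 ^ gen p v ∧
    ((fun S => vdown p v S) '' {S : Finset ℕ | DownAdm p v S}).ncard = 2 ^ gen p v := by
  have hp2 : 2 ≤ p := hp.two_le
  have hsubrange : ∀ S : Finset ℕ, DownAdm p v S → S ⊆ Finset.range v := by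
    intro S hS s hs
    rw [Finset.mem_range]
    have h1 := mem_lt_log hp2 hv hS hs
    have h2 : Nat.log p v < v := lt_of_dig_ne hp2 (dig_log_ne hp2 hv)
    omega
  have hinj : Set.InjOn (fun S => vdown p v S) {S : Finset ℕ | DownAdm p v S} := by
    intro S hS S' hS' heq
    simp only [Set.mem_setOf_eq] at hS hS'
    have heq' : vdown p v S = vdown p v S' := heq
    have h1 := vdown_eq (p := p) (hsubrange S hS)
    have h2 := vdown_eq (p := p) (hsubrange S' hS')
    have hsumZ : (∑ i ∈ S, (dig p v i : ℤ) * (p : ℤ) ^ i)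
        = ∑ i ∈ S', (dig p v i : ℤ) * (p : ℤ) ^ i := by
      rw [h1, h2] at heq'; linarith
    have hsumN : (∑ i ∈ S, dig p v i * p ^ i) = ∑ i ∈ S', dig p v i * p ^ i := by
      have : ((∑ i ∈ S, dig p v i * p ^ i : ℕ) : ℤ)
          = ((∑ i ∈ S', dig p v i * p ^ i : ℕ) : ℤ) := by
        push_cast; exact hsumZ
      exact_mod_cast this
    have hf1 : ∑ i ∈ S.filter (fun i => dig p v i ≠ 0), dig p v i * p ^ i
        = ∑ i ∈ S, dig p v i * p ^ i :=
      Finset.sum_filter_of_ne (fun x _ hx h0 => hx (by rw [h0, Nat.zero_mul]))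
    have hf2 : ∑ i ∈ S'.filter (fun i => dig p v i ≠ 0), dig p v i * p ^ i
        = ∑ i ∈ S', dig p v i * p ^ i :=
      Finset.sum_filter_of_ne (fun x _ hx h0 => hx (by rw [h0, Nat.zero_mul]))
    have hfeq : S.filter (fun i => dig p v i ≠ 0) = S'.filter (fun i => dig p v i ≠ 0) := by
      refine sum_digits_inj hp2 (fun i => dig p v i) (fun i => dig_lt (by omega) v i) v _ _
        (fun i hi => hsubrange S hS (Finset.mem_of_mem_filter i hi))
        (fun i hi => hsubrange S' hS' (Finset.mem_of_mem_filter i hi))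
        (fun i hi => (Finset.mem_filter.mp hi).2)
        (fun i hi => (Finset.mem_filter.mp hi).2)
        (by rw [hf1, hf2]; exact hsumN)
    exact phi_inj hS hS' hfeq
  have hphiinj : Set.InjOn (fun S : Finset ℕ => S.filter (fun i => dig p v i ≠ 0))
      {S : Finset ℕ | DownAdm p v S} :=
    fun S hS S' hS' h => phi_inj hS hS' h
  have himg : (fun S : Finset ℕ => S.filter (fun i => dig p v i ≠ 0)) ''
      {S : Finset ℕ | DownAdm p v S}
      = ↑(((Finset.range v).filter (fun i => dig p v i ≠ 0)).erase (Nat.log p v)).powerset := by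
    ext T
    constructor
    · rintro ⟨S, hS, rfl⟩
      simp only [Set.mem_setOf_eq] at hS
      rw [Finset.mem_coe, Finset.mem_powerset]
      intro s hsf
      rw [Finset.mem_filter] at hsf
      rw [Finset.mem_erase, Finset.mem_filter, Finset.mem_range]
      have h1 := mem_lt_log hp2 hv hS hsf.1
      exact ⟨by omega, lt_of_dig_ne hp2 hsf.2, hsf.2⟩
    · intro hT
      rw [Finset.mem_coe, Finset.mem_powerset] at hT
      obtain ⟨hadm, hfil⟩ := psi_spec hp2 hv hT
      exact ⟨psi p v T, hadm, hfil⟩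
  have hcard : {S : Finset ℕ | DownAdm p v S}.ncard = 2 ^ gen p v := by
    have h1 := Set.ncard_image_of_injOn hphiinj
    rw [himg, Set.ncard_coe_finset, Finset.card_powerset] at h1
    have hjmem : Nat.log p v ∈ (Finset.range v).filter (fun i => dig p v i ≠ 0) := by
      rw [Finset.mem_filter, Finset.mem_range]
      exact ⟨lt_of_dig_ne hp2 (dig_log_ne hp2 hv), dig_log_ne hp2 hv⟩
    rw [← h1, Finset.card_erase_of_mem hjmem]
    rfl
  exact ⟨hinj, hcard, by rw [Set.ncard_image_of_injOn hinj, hcard]⟩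

end SL2Tilt
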